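/- Let S = (s, t) ∈ ℝ^{2m×2} have full column rank, δ_j = (det(SᵀS))^{1/4}, and δ ≥ δ_j. With č = ‖s‖₂/δ and f̌ = (sᵀt ± √(δ⁴ − det(SᵀS)))/(‖s‖₂ δ), both columns of S Ď⁻¹ have Euclidean norm δ, where Ď = [[č, f̌],[0, č⁻¹]]. -/

import Mathlib

/-!
Everything depends on `S` only through its Gram matrix `G = SᵀS`: the squared column norms of
`S * D` are the diagonal entries of `Dᵀ * G * D`. For `D = [[c⁻¹, -f], [0, c]]` these are
`c⁻² G₀₀` and `f² G₀₀ - 2 f c G₀₁ + c² G₁₁`; with `c = ‖s‖/δ` the first is `δ²`, and `f` is a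
root of the quadratic equation "second entry `= δ²`", whose discriminant is a positive multiple of
`δ⁴ - det G ≥ 0`. Linear independence of the columns makes `G` positive definite, so `‖s‖ ≠ 0`
and `δ > 0`.
-/

open Matrix

noncomputable def enorm₂ {m : ℕ} (v : Fin m → ℝ) : ℝ := Real.sqrt (∑ i, v i ^ 2)

noncomputable def frob {m n : ℕ} (A : Matrix (Fin m) (Fin n) ℝ) : ℝ :=
  Real.sqrt (∑ i, ∑ j, A i j ^ 2)

noncomputable def specNorm {m n : ℕ} (A : Matrix (Fin m) (Fin n) ℝ) : ℝ :=
  ‖(Matrix.toEuclideanLin A).toContinuousLinearMap‖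

theorem Matrix.isHermitian_transpose_mul_self {m n α : Type*} [Fintype m] [CommSemiring α]
    [StarRing α] [TrivialStar α] (A : Matrix m n α) : (Aᵀ * A).IsHermitian := by
  simpa [Matrix.conjTranspose_eq_transpose_of_trivial] using Matrix.isHermitian_conjTranspose_mul_self A

noncomputable def sigmaMax (B : Matrix (Fin 2) (Fin 2) ℝ) : ℝ :=
  Real.sqrt (max ((Matrix.isHermitian_transpose_mul_self B).eigenvalues 0)
                 ((Matrix.isHermitian_transpose_mul_self B).eigenvalues 1))

noncomputable def sigmaMin (B : Matrix (Fin 2) (Fin 2) ℝ) : ℝ :=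
  Real.sqrt (min ((Matrix.isHermitian_transpose_mul_self B).eigenvalues 0)
                 ((Matrix.isHermitian_transpose_mul_self B).eigenvalues 1))

theorem Matrix.posDef_transpose_mul_self {m n : Type*} [Fintype m] [Fintype n]
    (S : Matrix m n ℝ) (hS : LinearIndependent ℝ S.col) : (Sᵀ * S).PosDef := by
  simpa using PosDef.conjTranspose_mul_self S (mulVec_injective_iff.mpr hS)

theorem enorm₂_sq {m : ℕ} (v : Fin m → ℝ) : enorm₂ v ^ 2 = ∑ i, v i ^ 2 :=
  Real.sq_sqrt (Finset.sum_nonneg fun i _ => sq_nonneg (v i))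

theorem enorm₂_mul_col {m n k : ℕ} (S : Matrix (Fin m) (Fin n) ℝ) (D : Matrix (Fin n) (Fin k) ℝ)
    (j : Fin k) : enorm₂ (fun i => (S * D) i j) = Real.sqrt ((Dᵀ * (Sᵀ * S) * D) j j) := by
  rw [enorm₂, ← Matrix.mul_assoc, ← transpose_mul, Matrix.mul_assoc]
  simp only [sq, Matrix.mul_apply, transpose_apply]

theorem Real.sqrt_sqrt_pow_four {x : ℝ} (hx : 0 ≤ x) : √(√x) ^ 4 = x := by
  rw [show 4 = 2 * 2 from rfl, pow_mul, Real.sq_sqrt (Real.sqrt_nonneg x), Real.sq_sqrt hx]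

theorem diag_transpose_mul_mul_eq_sq (G : Matrix (Fin 2) (Fin 2) ℝ) (hG : G 1 0 = G 0 1)
    {a δ u : ℝ} (ha : a ≠ 0) (hδ : δ ≠ 0) (hG₀₀ : G 0 0 = a ^ 2) (hu : u ^ 2 = δ ^ 4 - G.det)
    (j : Fin 2) :
    (!![(a / δ)⁻¹, -((G 0 1 + u) / (a * δ)); 0, a / δ]ᵀ * G *
      !![(a / δ)⁻¹, -((G 0 1 + u) / (a * δ)); 0, a / δ]) j j = δ ^ 2 := by
  rw [det_fin_two, hG, hG₀₀] at hu
  fin_cases j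
  · simp only [Fin.zero_eta, Matrix.mul_apply, transpose_apply, of_apply, cons_val', cons_val_zero,
      cons_val_one, cons_val_fin_one, Fin.sum_univ_two, zero_mul, mul_zero, add_zero, hG₀₀]
    field_simp
  · simp only [Fin.mk_one, Matrix.mul_apply, transpose_apply, of_apply, cons_val', cons_val_zero,
      cons_val_one, cons_val_fin_one, Fin.sum_univ_two, hG, hG₀₀]
    field_simp
    linear_combination hu

theorem columns_of_equilibrated_column_scaling {m : ℕ}
    (S : Matrix (Fin (2*m)) (Fin 2) ℝ)
    (hSI : LinearIndependent ℝ ![fun i => S i 0, fun i => S i 1])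
    (δj δ : ℝ)
    (hδj : δj = Real.sqrt (Real.sqrt (Sᵀ * S).det))
    (hδ : δj ≤ δ)
    (ε : ℝ) (hε : ε = 1 ∨ ε = -1)
    (cc fc : ℝ)
    (hcc : cc = enorm₂ (fun i => S i 0) / δ)
    (hfc : fc = ((∑ i, S i 0 * S i 1) + ε * Real.sqrt (δ ^ 4 - (Sᵀ * S).det)) /
        (enorm₂ (fun i => S i 0) * δ)) :
    enorm₂ (fun i => (S * (!![cc⁻¹, -fc; 0, cc] : Matrix (Fin 2) (Fin 2) ℝ)) i 0) = δ ∧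
    enorm₂ (fun i => (S * (!![cc⁻¹, -fc; 0, cc] : Matrix (Fin 2) (Fin 2) ℝ)) i 1) = δ := by
  have hG : (Sᵀ * S).PosDef := S.posDef_transpose_mul_self (by
    convert hSI using 1; ext j i; fin_cases j <;> rfl)
  have hG₀₀ : (Sᵀ * S) 0 0 = enorm₂ (fun i => S i 0) ^ 2 := by
    rw [enorm₂_sq]
    simp only [Matrix.mul_apply, transpose_apply, sq]
  have hG₀₁ : (Sᵀ * S) 0 1 = ∑ i, S i 0 * S i 1 := by simp [Matrix.mul_apply]
  have hG₁₀ : (Sᵀ * S) 1 0 = (Sᵀ * S) 0 1 := by simp [Matrix.mul_apply, mul_comm]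
  have ha : enorm₂ (fun i => S i 0) ≠ 0 := by
    have h := hG.diag_pos (i := 0)
    rw [hG₀₀] at h
    exact pow_ne_zero_iff two_ne_zero |>.mp h.ne'
  have hδj4 : δj ^ 4 = (Sᵀ * S).det := hδj ▸ Real.sqrt_sqrt_pow_four hG.det_pos.le
  have hδpos : 0 < δ := (hδj ▸ Real.sqrt_pos.mpr (Real.sqrt_pos.mpr hG.det_pos)).trans_le hδ
  have hdet_le : (Sᵀ * S).det ≤ δ ^ 4 :=
    hδj4 ▸ pow_le_pow_left₀ (hδj ▸ Real.sqrt_nonneg _) hδ 4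
  have hu : (ε * √(δ ^ 4 - (Sᵀ * S).det)) ^ 2 = δ ^ 4 - (Sᵀ * S).det := by
    rw [mul_pow, Real.sq_sqrt (sub_nonneg.mpr hdet_le)]
    rcases hε with rfl | rfl <;> norm_num
  have hcol (j : Fin 2) :
      enorm₂ (fun i => (S * (!![cc⁻¹, -fc; 0, cc] : Matrix (Fin 2) (Fin 2) ℝ)) i j) = δ := by
    rw [hcc, hfc, ← hG₀₁, enorm₂_mul_col,
      diag_transpose_mul_mul_eq_sq _ hG₁₀ ha hδpos.ne' hG₀₀ hu, Real.sqrt_sq hδpos.le]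
  exact ⟨hcol 0, hcol 1⟩
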